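/- arXiv:1102.4802 — 2 statements merged into one kernel-verified Lean document; each statement's English description precedes it below -/
import Mathlib

section
/- Let G be a g-chromatic edge-colored graph of order n with more than C(n-m, 2) edges, where 1 <= m <= n-1. If g(c) <= (|E(G)|/(n-m)) * f(c) for every color c, then G has an f-chromatic spanning forest with exactly m components. -/
open SimpleGraph Finset

/-- Number of connected components of a graph. -/
noncomputable def omega {V : Type*} (G : SimpleGraph V) : ℕ :=
  Nat.card G.ConnectedComponent

/-- Number of edges of `G` having color `c`. -/
noncomputable def colorCount {V C : Type*} (G : SimpleGraph V)
    (color : Sym2 V → C) (c : C) : ℕ :=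
  Nat.card {e : Sym2 V // e ∈ G.edgeSet ∧ color e = c}

/-- `G` is `f`-chromatic: each color `c` appears on at most `f c` edges. -/
def IsChromatic {V C : Type*} (G : SimpleGraph V)
    (color : Sym2 V → C) (f : C → ℕ) : Prop :=
  ∀ c, colorCount G color c ≤ f c

/-- `G - E_R(G)` : delete all edges whose color lies in `R`. -/
def delR {V C : Type*} (G : SimpleGraph V) (color : Sym2 V → C)
    (R : Finset C) : SimpleGraph V :=
  G.deleteEdges {e | color e ∈ R}

/-!
Use the cycle matroid of `G` together with the partition constraint allowing `f c` edges of
color `c`. By Rado's theorem for the submodular rank `r(S) = n - ω(S)`, an `f`-chromatic forest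
with `n - m` edges, hence with `m` components, exists as soon as `ω(G - E_R) ≤ m + f(R)` for every
set `R` of colors. If this failed for some `R`, then `s = f(R) < n - m`, the graph `G - E_R` has
at least `m + s + 1` components and so at most `C(n - m - s, 2)` edges, while at most
`∑_{c ∈ R} g(c) ≤ |E| s / (n - m)` edges were deleted; together this forces `|E| ≤ C(n - m, 2)`.
-/

namespace Finset

section Rado

variable {α ι : Type*} [DecidableEq α]

def RadoCondition (r : Finset α → ℕ) (d : ℕ) (A : ι → Finset α) : Prop :=
  ∀ J : Finset ι, #J ≤ r (J.biUnion A) + d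

variable [DecidableEq ι]

lemma update_erase_subset (A : ι → Finset α) (j : ι) (y : α) (i : ι) :
    Function.update A j ((A j).erase y) i ⊆ A i := by
  rcases eq_or_ne i j with rfl | hij
  · simpa using erase_subset y (A i)
  · simp [Function.update_of_ne hij]

variable {r : Finset α → ℕ} {d : ℕ} {A : ι → Finset α}

lemma RadoCondition.mem_of_update_lt (hA : RadoCondition r d A) {j : ι} {B : Finset α}
    {J : Finset ι} (hJ : r (J.biUnion (Function.update A j B)) + d < #J) : j ∈ J := by
  by_contra hjJ
  have hAJ : J.biUnion (Function.update A j B) = J.biUnion A :=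
    biUnion_congr rfl fun i hi => Function.update_of_ne (ne_of_mem_of_not_mem hi hjJ) _ _
  exact (hA J).not_gt (hAJ ▸ hJ)

-- If both shrunk families had violating index sets `J₁ ∋ j` and `J₂ ∋ j`, submodularity of `r`
-- applied to their unions would bound `#(J₁ ∪ J₂) + #((J₁ ∩ J₂).erase j)` too tightly for `A`.
lemma RadoCondition.update_erase_or (hmono : Monotone r)
    (hsub : ∀ S T, r (S ∪ T) + r (S ∩ T) ≤ r S + r T) (hA : RadoCondition r d A) {j : ι}
    {x₁ x₂ : α} (hx : x₁ ≠ x₂) :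
    RadoCondition r d (Function.update A j ((A j).erase x₁)) ∨
      RadoCondition r d (Function.update A j ((A j).erase x₂)) := by
  by_contra! h
  simp only [RadoCondition, not_forall, not_le] at h
  obtain ⟨⟨J₁, hJ₁⟩, ⟨J₂, hJ₂⟩⟩ := h
  set A₁ := Function.update A j ((A j).erase x₁)
  set A₂ := Function.update A j ((A j).erase x₂)
  have hj₁ := hA.mem_of_update_lt hJ₁
  have hj₂ := hA.mem_of_update_lt hJ₂
  have hunion : (J₁ ∪ J₂).biUnion A ⊆ J₁.biUnion A₁ ∪ J₂.biUnion A₂ := by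
    intro e he
    obtain ⟨i, hi, hei⟩ := mem_biUnion.1 he
    simp only [mem_union, mem_biUnion, A₁, A₂]
    rcases eq_or_ne i j with rfl | hij
    · by_cases he₁ : e = x₁
      · exact Or.inr ⟨i, hj₂, by rw [Function.update_self]; exact mem_erase.2 ⟨he₁ ▸ hx, hei⟩⟩
      · exact Or.inl ⟨i, hj₁, by rw [Function.update_self]; exact mem_erase.2 ⟨he₁, hei⟩⟩
    · rcases mem_union.1 hi with hi | hi
      · exact Or.inl ⟨i, hi, by rwa [Function.update_of_ne hij]⟩
      · exact Or.inr ⟨i, hi, by rwa [Function.update_of_ne hij]⟩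
  have hinter : ((J₁ ∩ J₂).erase j).biUnion A ⊆ J₁.biUnion A₁ ∩ J₂.biUnion A₂ := by
    intro e he
    obtain ⟨i, hi, hei⟩ := mem_biUnion.1 he
    obtain ⟨hij, hi⟩ := mem_erase.1 hi
    refine mem_inter.2 ⟨mem_biUnion.2 ⟨i, (mem_inter.1 hi).1, ?_⟩,
      mem_biUnion.2 ⟨i, (mem_inter.1 hi).2, ?_⟩⟩ <;>
      simpa [A₁, A₂, Function.update_of_ne hij] using hei
  have hcard : #(J₁ ∪ J₂) + #((J₁ ∩ J₂).erase j) + 1 = #J₁ + #J₂ := by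
    rw [card_erase_of_mem (mem_inter.2 ⟨hj₁, hj₂⟩), ← card_union_add_card_inter]
    have := card_pos.2 ⟨j, mem_inter.2 ⟨hj₁, hj₂⟩⟩
    omega
  have := hA (J₁ ∪ J₂)
  have := hA ((J₁ ∩ J₂).erase j)
  have := hmono hunion
  have := hmono hinter
  have := hsub (J₁.biUnion A₁) (J₂.biUnion A₂)
  omega

-- Rado's theorem with defect, in Welsh's form for monotone submodular functions: shrink the
-- sets one element at a time while keeping the condition, down to singletons.
theorem RadoCondition.exists_transversal [Fintype ι] (hmono : Monotone r)
    (hsub : ∀ S T, r (S ∪ T) + r (S ∩ T) ≤ r S + r T) (hne : ∀ i, (A i).Nonempty)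
    (hA : RadoCondition r d A) :
    ∃ x : ι → α, (∀ i, x i ∈ A i) ∧ Fintype.card ι ≤ r (univ.image x) + d := by
  induction hN : ∑ i, #(A i) using Nat.strong_induction_on generalizing A with
  | _ N ih =>
  by_cases hsingle : ∀ i, #(A i) = 1
  · choose x hx using fun i => card_eq_one.1 (hsingle i)
    refine ⟨x, fun i => by simp [hx i], ?_⟩
    have himage : univ.image x = univ.biUnion A := by ext; simp [hx, eq_comm]
    simpa [himage] using hA univ
  obtain ⟨j, hj⟩ := not_forall.1 hsingle
  have hj : 1 < #(A j) := by have := card_pos.2 (hne j); omega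
  obtain ⟨x₁, hx₁, x₂, hx₂, hx⟩ := one_lt_card.1 hj
  obtain ⟨y, hy, hAy⟩ : ∃ y ∈ A j, RadoCondition r d (Function.update A j ((A j).erase y)) := by
    rcases hA.update_erase_or hmono hsub (j := j) hx with h | h
    exacts [⟨x₁, hx₁, h⟩, ⟨x₂, hx₂, h⟩]
  have hlt : ∑ i, #(Function.update A j ((A j).erase y) i) < N := by
    rw [← hN]
    refine sum_lt_sum (fun i _ => card_le_card (update_erase_subset A j y i)) ⟨j, mem_univ _, ?_⟩
    simpa using card_erase_lt_of_mem hy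
  have hne' : ∀ i, (Function.update A j ((A j).erase y) i).Nonempty := by
    intro i
    rcases eq_or_ne i j with rfl | hij
    · rw [Function.update_self, ← card_pos, card_erase_of_mem hy]
      omega
    · simpa [Function.update_of_ne hij] using hne i
  obtain ⟨x, hx, hcard⟩ := ih _ hlt hne' hAy rfl
  exact ⟨x, fun i => update_erase_subset A j y i (hx i), hcard⟩

end Rado

lemma card_le_sum_image_fst {κ : Type*} [DecidableEq κ] (f : κ → ℕ)
    (J : Finset (Σ c, Fin (f c))) : #J ≤ ∑ c ∈ J.image Sigma.fst, f c :=
  calc #J ≤ #((J.image Sigma.fst).sigma fun _ => univ) :=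
        card_le_card fun i hi => mem_sigma.2 ⟨mem_image_of_mem _ hi, mem_univ _⟩
    _ = ∑ c ∈ J.image Sigma.fst, f c := by simp [card_sigma]

lemma card_sigma_fin_eq_sum {κ : Type*} (K : Finset κ) (f : κ → ℕ) :
    Fintype.card (Σ c : K, Fin (f c)) = ∑ c ∈ K, f c := by
  simpa [Fintype.card_sigma] using sum_attach K f

lemma card_filter_val_fst_eq_le {κ : Type*} [DecidableEq κ] {K : Finset κ} (f : κ → ℕ) (c : κ) :
    #({i | (i.1 : κ) = c} : Finset (Σ c : K, Fin (f c))) ≤ f c := by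
  refine (card_le_sum_image_fst _ _).trans ?_
  by_cases hc : c ∈ K
  · refine (sum_le_sum_of_subset (f := fun c' : K => f c')
      (?_ : _ ⊆ ({⟨c, hc⟩} : Finset K))).trans (by simp)
    intro c' hc'
    obtain ⟨i, hi, rfl⟩ := mem_image.1 hc'
    exact mem_singleton.2 (Subtype.ext (mem_filter.1 hi).2)
  · rw [filter_false_of_mem fun i _ (hi : (i.1 : κ) = c) => hc (hi ▸ i.1.2)]
    simp

lemma sum_succ_choose_two_le {ι : Type*} (s : Finset ι) (t : ι → ℕ) :
    ∑ i ∈ s, (t i + 1).choose 2 ≤ (∑ i ∈ s, t i + 1).choose 2 := by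
  classical
  induction s using Finset.induction_on with
  | empty => simp
  | insert i s hi ih =>
    have hpair (a b : ℕ) : (a + 1).choose 2 + (b + 1).choose 2 ≤ (a + b + 1).choose 2 := by
      have : ((a + 1).choose 2 + (b + 1).choose 2 : ℚ) ≤ (a + b + 1).choose 2 := by
        simp only [Nat.cast_choose_two]
        push_cast
        nlinarith [(a.cast_nonneg : (0 : ℚ) ≤ a), (b.cast_nonneg : (0 : ℚ) ≤ b)]
      exact_mod_cast this
    rw [sum_insert hi, sum_insert hi, add_assoc]
    exact (Nat.add_le_add_left ih _).trans (hpair _ _)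

end Finset

namespace Matroid

variable {α : Type*} (M : Matroid α)

lemma eRk_coe_finset_ne_top (S : Finset α) : M.eRk S ≠ ⊤ :=
  eRk_ne_top_iff.2 (M.isRkFinite_of_finite S.finite_toSet)

lemma monotone_toNat_eRk : Monotone fun S : Finset α => (M.eRk S).toNat :=
  fun _ _ h => ENat.toNat_le_toNat (M.eRk_mono (coe_subset.2 h)) (M.eRk_coe_finset_ne_top _)

lemma toNat_eRk_union_add_toNat_eRk_inter_le [DecidableEq α] (S T : Finset α) :
    (M.eRk ↑(S ∪ T)).toNat + (M.eRk ↑(S ∩ T)).toNat ≤ (M.eRk S).toNat + (M.eRk T).toNat := by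
  have h := M.eRk_inter_add_eRk_union_le (S : Set α) T
  rw [← coe_inter, ← coe_union, ← ENat.natCast_toNat (M.eRk_coe_finset_ne_top (S ∩ T)),
    ← ENat.natCast_toNat (M.eRk_coe_finset_ne_top (S ∪ T)),
    ← ENat.natCast_toNat (M.eRk_coe_finset_ne_top S),
    ← ENat.natCast_toNat (M.eRk_coe_finset_ne_top T)] at h
  norm_cast at h
  omega

end Matroid

namespace SimpleGraph

variable {V : Type*} {G H : SimpleGraph V} {u v : V}

lemma Reachable.of_forall_adj_reachable (h : ∀ ⦃a b⦄, G.Adj a b → H.Reachable a b)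
    (huv : G.Reachable u v) : H.Reachable u v := by
  obtain ⟨p⟩ := huv
  induction p with
  | nil => rfl
  | cons hadj _ ih => exact (h hadj).trans ih

lemma fromEdgeSet_insert (s : Set (Sym2 V)) (u v : V) :
    fromEdgeSet (insert s(u, v) s) = fromEdgeSet s ⊔ edge u v := by
  rw [Set.insert_eq, fromEdgeSet_union, sup_comm]
  rfl

lemma IsAcyclic.reachable_of_not_isAcyclic_insert {s : Set (Sym2 V)}
    (hs : (fromEdgeSet s).IsAcyclic) (h : ¬(fromEdgeSet (insert s(u, v) s)).IsAcyclic) :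
    (fromEdgeSet s).Reachable u v := by
  by_contra huv
  exact h (fromEdgeSet_insert s u v ▸ hs.sup_edge_of_not_reachable huv)

lemma IsAcyclic.reachable_of_forall_not_isAcyclic_insert {s t : Set (Sym2 V)}
    (hs : (fromEdgeSet s).IsAcyclic)
    (ht : ∀ e ∈ t, e ∉ s → ¬(fromEdgeSet (insert e s)).IsAcyclic) ⦃a b : V⦄
    (hab : (fromEdgeSet t).Adj a b) : (fromEdgeSet s).Reachable a b := by
  rw [fromEdgeSet_adj] at hab
  by_cases habs : s(a, b) ∈ s
  · exact Adj.reachable ((fromEdgeSet_adj _).2 ⟨habs, hab.2⟩)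
  · exact hs.reachable_of_not_isAcyclic_insert (ht _ hab.1 habs)

lemma not_reachable_of_isAcyclic_insert {s : Set (Sym2 V)} (huv : u ≠ v) (hs : s(u, v) ∉ s)
    (h : (fromEdgeSet (insert s(u, v) s)).IsAcyclic) : ¬(fromEdgeSet s).Reachable u v := by
  rw [fromEdgeSet_insert, isAcyclic_sup_fromEdgeSet_iff] at h
  simpa [huv, hs] using h.2

-- Constant along the edges of `G ⊔ edge u v`, this identifies the components of `G ⊔ edge u v`
-- with the components of `G` other than that of `v`.
open Classical in
noncomputable def mergedComponentMk (G : SimpleGraph V) (u v x : V) : G.ConnectedComponent :=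
  if G.Reachable v x then G.connectedComponentMk u else G.connectedComponentMk x

lemma mergedComponentMk_ne (h : ¬G.Reachable u v) (x : V) :
    G.mergedComponentMk u v x ≠ G.connectedComponentMk v := by
  intro hx
  by_cases hvx : G.Reachable v x
  · rw [mergedComponentMk, if_pos hvx] at hx
    exact h (ConnectedComponent.eq.1 hx)
  · rw [mergedComponentMk, if_neg hvx] at hx
    exact hvx (ConnectedComponent.eq.1 hx).symm

lemma Reachable.mergedComponentMk_eq (h : ¬G.Reachable u v) {a b : V}
    (hab : (G ⊔ edge u v).Reachable a b) :
    G.mergedComponentMk u v a = G.mergedComponentMk u v b := by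
  classical
  obtain ⟨p⟩ := hab
  induction p with
  | nil => rfl
  | @cons a b _ hadj _ ih =>
    refine Eq.trans ?_ ih
    rcases hadj with hadj | hadj
    · have hiff : G.Reachable v a ↔ G.Reachable v b :=
        ⟨(·.trans hadj.reachable), (·.trans hadj.reachable.symm)⟩
      simp only [mergedComponentMk, ConnectedComponent.eq.2 hadj.reachable]
      exact if_congr hiff rfl rfl
    · have hvu : ¬G.Reachable v u := fun hvu => h hvu.symm
      rcases (edge_adj u v a b).1 hadj with ⟨⟨rfl, rfl⟩ | ⟨rfl, rfl⟩, -⟩ <;>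
        simp [mergedComponentMk, hvu]

variable [Fintype V]

lemma omega_le_card (G : SimpleGraph V) : omega G ≤ Fintype.card V := by
  rw [omega, ← Nat.card_eq_fintype_card]
  exact Nat.card_le_card_of_surjective _ fun K => K.exists_rep

lemma omega_bot : omega (⊥ : SimpleGraph V) = Fintype.card V := by
  rw [omega, ← Nat.card_eq_fintype_card]
  refine (Nat.card_congr (Equiv.ofBijective (⊥ : SimpleGraph V).connectedComponentMk
    ⟨fun a b hab => ?_, fun K => K.exists_rep⟩)).symm
  exact reachable_bot.1 (ConnectedComponent.eq.1 hab)

lemma omega_le_omega_of_forall_adj_reachable (h : ∀ ⦃a b⦄, G.Adj a b → H.Reachable a b) :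
    omega H ≤ omega G :=
  Nat.card_le_card_of_surjective
    (ConnectedComponent.lift H.connectedComponentMk fun _ _ p _ =>
      ConnectedComponent.sound (p.reachable.of_forall_adj_reachable h))
    fun K => K.ind fun x => ⟨G.connectedComponentMk x, rfl⟩

lemma omega_sup_edge_add_one (h : ¬G.Reachable u v) : omega (G ⊔ edge u v) + 1 = omega G := by
  classical
  let Ψ : (G ⊔ edge u v).ConnectedComponent → {K // K ≠ G.connectedComponentMk v} :=
    ConnectedComponent.lift (fun x => ⟨G.mergedComponentMk u v x, mergedComponentMk_ne h x⟩)
      fun _ _ p _ => Subtype.ext (p.reachable.mergedComponentMk_eq h)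
  have huv : (G ⊔ edge u v).Reachable u v := Adj.reachable (Or.inr (by
    rw [edge_adj]; exact ⟨Or.inl ⟨rfl, rfl⟩, fun huv => h (huv ▸ Reachable.rfl)⟩))
  have hle : G ≤ G ⊔ edge u v := le_sup_left
  have hΨ : Function.Bijective Ψ := by
    constructor
    · refine ConnectedComponent.ind₂ fun a b hab => ConnectedComponent.sound ?_
      have hab : G.mergedComponentMk u v a = G.mergedComponentMk u v b := congrArg Subtype.val hab
      by_cases hva : G.Reachable v a <;> by_cases hvb : G.Reachable v b <;>
        simp only [mergedComponentMk, hva, hvb, if_true, if_false, ConnectedComponent.eq] at hab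
      · exact (hva.symm.trans hvb).mono hle
      · exact (hva.symm.mono hle).trans (huv.symm.trans (hab.mono hle))
      · exact (hab.mono hle).trans (huv.trans (hvb.mono hle))
      · exact hab.mono hle
    · rintro ⟨K, hK⟩
      induction K using ConnectedComponent.ind with | h x => ?_
      have hvx : ¬G.Reachable v x := fun hvx => hK (ConnectedComponent.sound hvx.symm)
      exact ⟨(G ⊔ edge u v).connectedComponentMk x, Subtype.ext (if_neg hvx)⟩
  rw [omega, omega, Nat.card_congr (Equiv.ofBijective Ψ hΨ), ← Finite.card_option,
    Nat.card_congr (Equiv.optionSubtypeNe _)]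

theorem omega_fromEdgeSet_add_card [DecidableEq V] {S : Finset (Sym2 V)}
    (hS : ∀ e ∈ S, ¬e.IsDiag) (hac : (fromEdgeSet (S : Set (Sym2 V))).IsAcyclic) :
    omega (fromEdgeSet (S : Set (Sym2 V))) + #S = Fintype.card V := by
  induction S using Finset.induction_on with
  | empty => simp [fromEdgeSet_empty, omega_bot]
  | insert e S he ih =>
    induction e using Sym2.ind with | h u v => ?_
    have huv : u ≠ v := by simpa using hS _ (mem_insert_self _ _)
    rw [coe_insert] at hac
    have hacS := hac.anti (fromEdgeSet_mono (Set.subset_insert _ _))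
    rw [coe_insert, card_insert_of_notMem he,
      ← ih (fun e he => hS e (mem_insert_of_mem he)) hacS,
      ← omega_sup_edge_add_one (not_reachable_of_isAcyclic_insert huv (mod_cast he) hac),
      fromEdgeSet_insert]
    ring

theorem card_edgeFinset_le_choose_omega (G : SimpleGraph V) [Fintype G.edgeSet] :
    #G.edgeFinset ≤ (Fintype.card V - omega G + 1).choose 2 := by
  classical
  let T : G.ConnectedComponent → Finset V := fun K => {v | G.connectedComponentMk v = K}
  have hT : ∀ K, 0 < #(T K) := fun K =>
    K.ind fun v => card_pos.2 ⟨v, by simp [T]⟩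
  have hsum : ∑ K, (#(T K) - 1) + omega G = Fintype.card V := by
    rw [omega, Nat.card_eq_fintype_card, Fintype.card, card_eq_sum_ones, ← sum_add_distrib,
      ← card_univ, card_eq_sum_card_fiberwise fun v _ => mem_univ (G.connectedComponentMk v)]
    exact sum_congr rfl fun K _ => Nat.sub_add_cancel (hT K)
  have hsub : G.edgeFinset ⊆ univ.biUnion fun K => (T K).offDiag.image Sym2.mk.uncurry := by
    intro e he
    induction e using Sym2.ind with | h a b => ?_
    have hab : G.Adj a b := by simpa using he
    simp only [mem_biUnion, mem_univ, true_and, mem_image, mem_offDiag, T, mem_filter]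
    exact ⟨_, (a, b), ⟨rfl, (ConnectedComponent.eq.2 hab.reachable).symm, hab.ne⟩, rfl⟩
  calc #G.edgeFinset
      ≤ ∑ K, #((T K).offDiag.image Sym2.mk.uncurry) := (card_le_card hsub).trans card_biUnion_le
    _ = ∑ K, (#(T K) - 1 + 1).choose 2 := by
      simp only [Sym2.card_image_offDiag, fun K => Nat.sub_add_cancel (hT K)]
    _ ≤ (∑ K, (#(T K) - 1) + 1).choose 2 := sum_succ_choose_two_le _ _
    _ = (Fintype.card V - omega G + 1).choose 2 := by rw [← hsum, Nat.add_sub_cancel]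

section CycleMatroid

variable [DecidableEq V]

variable (G) in
noncomputable def cycleMatroid : Matroid (Sym2 V) :=
  (IndepMatroid.ofFinset G.edgeSet
    (fun I => (I : Set (Sym2 V)) ⊆ G.edgeSet ∧ (fromEdgeSet (I : Set (Sym2 V))).IsAcyclic)
    ⟨by simp, by simp [fromEdgeSet_empty]⟩
    (fun I J hJ hIJ => ⟨(coe_subset.2 hIJ).trans hJ.1,
      hJ.2.anti (fromEdgeSet_mono (coe_subset.2 hIJ))⟩)
    (fun I J hI hJ hlt => by
      -- Otherwise every edge of `J` joins vertices connected by `I`, so `ω(I) ≤ ω(J)`.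
      by_contra! h
      have hIJ := omega_le_omega_of_forall_adj_reachable
        (hI.2.reachable_of_forall_not_isAcyclic_insert (t := J) fun e he heI hac =>
          h e he heI (by rw [coe_insert]; exact Set.insert_subset (hJ.1 he) hI.1)
            (by rwa [coe_insert]))
      have hIcard :=
        omega_fromEdgeSet_add_card (fun e he => G.not_isDiag_of_mem_edgeSet (hI.1 he)) hI.2
      have hJcard :=
        omega_fromEdgeSet_add_card (fun e he => G.not_isDiag_of_mem_edgeSet (hJ.1 he)) hJ.2
      omega)
    (fun _ hI => hI.1)).matroid

lemma cycleMatroid_indep_iff {I : Finset (Sym2 V)} :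
    (cycleMatroid G).Indep I ↔
      (I : Set (Sym2 V)) ⊆ G.edgeSet ∧ (fromEdgeSet (I : Set (Sym2 V))).IsAcyclic := by
  simp [cycleMatroid]

theorem toNat_eRk_cycleMatroid_add_omega {D : Finset (Sym2 V)}
    (hD : (D : Set (Sym2 V)) ⊆ G.edgeSet) :
    ((cycleMatroid G).eRk D).toNat + omega (fromEdgeSet (D : Set (Sym2 V))) = Fintype.card V := by
  obtain ⟨B, hB⟩ := ((cycleMatroid G).isRkFinite_of_finite D.finite_toSet).exists_finset_isBasis'
  have hBind := cycleMatroid_indep_iff.1 hB.indep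
  have hreach := hBind.2.reachable_of_forall_not_isAcyclic_insert (t := D) fun e he heB hac =>
    hB.insert_not_indep ⟨he, heB⟩ (by
      rw [← coe_insert, cycleMatroid_indep_iff, coe_insert]
      exact ⟨Set.insert_subset (hD he) hBind.1, hac⟩)
  have hω : omega (fromEdgeSet (D : Set (Sym2 V))) = omega (fromEdgeSet (B : Set (Sym2 V))) :=
    le_antisymm (ConnectedComponent.card_le_card_of_le (fromEdgeSet_mono hB.subset))
      (omega_le_omega_of_forall_adj_reachable hreach)
  rw [← hB.encard_eq_eRk, Set.encard_coe_eq_coe_finsetCard, ENat.toNat_natCast, hω, add_comm]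
  exact omega_fromEdgeSet_add_card (fun e he => G.not_isDiag_of_mem_edgeSet (hBind.1 he)) hBind.2

end CycleMatroid

end SimpleGraph

section Coloring

variable {V C : Type*}

lemma colorCount_eq_card_filter (H : SimpleGraph V) [Fintype H.edgeSet] (color : Sym2 V → C)
    [DecidableEq C] (c : C) : colorCount H color c = #{e ∈ H.edgeFinset | color e = c} := by
  rw [colorCount, ← Fintype.card_coe, ← Nat.card_eq_fintype_card]
  exact Nat.card_congr (Equiv.subtypeEquivRight fun e => by simp)

lemma delR_eq_fromEdgeSet (G : SimpleGraph V) [Fintype G.edgeSet] (color : Sym2 V → C)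
    [DecidableEq C] (R : Finset C) :
    delR G color R = fromEdgeSet ↑{e ∈ G.edgeFinset | color e ∉ R} := by
  ext a b
  simp only [delR, deleteEdges_adj, Set.mem_ofPred_eq, fromEdgeSet_adj, coe_filter, mem_edgeFinset,
    mem_edgeSet]
  exact ⟨fun h => ⟨⟨h.1, h.2⟩, h.1.ne⟩, fun h => ⟨h.1.1, h.1.2⟩⟩

lemma card_edgeFinset_delR (G : SimpleGraph V) [Fintype G.edgeSet] (color : Sym2 V → C)
    [DecidableEq C] (R : Finset C) [Fintype (delR G color R).edgeSet] :
    #(delR G color R).edgeFinset = #{e ∈ G.edgeFinset | color e ∉ R} := by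
  congr 1
  ext e
  rw [mem_edgeFinset, delR, edgeSet_deleteEdges]
  simp

lemma le_choose_two_of_le_div_mul_add_choose_two {e : ℚ} {k s : ℕ} (hsk : s < k)
    (h : e ≤ e / k * s + ((k - s).choose 2 : ℕ)) : e ≤ (k.choose 2 : ℕ) := by
  obtain ⟨a, rfl⟩ := Nat.exists_eq_add_of_lt hsk
  rw [show s + a + 1 - s = a + 1 by omega] at h
  push_cast [Nat.cast_choose_two] at h ⊢
  have hk : (0 : ℚ) < s + a + 1 := by positivity
  set q := e / (s + a + 1 : ℚ)
  have he : e = q * (s + a + 1) := (div_mul_cancel₀ _ hk.ne').symm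
  rw [he] at h ⊢
  have ha : (0 : ℚ) ≤ a := a.cast_nonneg
  have hs : (0 : ℚ) ≤ s := s.cast_nonneg
  have hq : q ≤ a / 2 := by nlinarith
  nlinarith

theorem omega_delR_le_of_isChromatic [Fintype V] (G : SimpleGraph V) (color : Sym2 V → C)
    (f g : C → ℕ) {m : ℕ} (hg : IsChromatic G color g)
    (hE : Nat.card G.edgeSet > (Fintype.card V - m).choose 2)
    (hfg : ∀ c, (g c : ℚ) ≤ (Nat.card G.edgeSet : ℚ) / ((Fintype.card V : ℚ) - m) * f c)
    (R : Finset C) : omega (delR G color R) ≤ m + ∑ c ∈ R, f c := by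
  classical
  by_contra! hlt
  set n := Fintype.card V
  set s := ∑ c ∈ R, f c
  set E := G.edgeFinset
  have hω := omega_le_card (delR G color R)
  have hsk : s < n - m := by omega
  have hcard : Nat.card G.edgeSet = #E := Nat.card_eq_fintype_card.trans G.edgeFinset_card.symm
  have hkept : #{e ∈ E | color e ∉ R} ≤ (n - m - s).choose 2 := by
    rw [← card_edgeFinset_delR]
    exact (card_edgeFinset_le_choose_omega _).trans (Nat.choose_le_choose 2 (by omega))
  have hfibers : #{e ∈ E | color e ∈ R} ≤ ∑ c ∈ R, colorCount G color c := by
    rw [card_eq_sum_card_fiberwise (s := {e ∈ E | color e ∈ R}) (t := R)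
      fun e he => (mem_filter.1 he).2]
    refine sum_le_sum fun c _ => ?_
    rw [colorCount_eq_card_filter]
    exact card_le_card (filter_subset_filter _ (filter_subset _ _))
  have hdeleted : (#{e ∈ E | color e ∈ R} : ℚ) ≤ #E / (n - m : ℕ) * s := by
    calc (#{e ∈ E | color e ∈ R} : ℚ)
        ≤ ∑ c ∈ R, (colorCount G color c : ℚ) := by exact_mod_cast hfibers
      _ ≤ ∑ c ∈ R, #E / (n - m : ℕ) * (f c : ℚ) := sum_le_sum fun c _ =>
          (Nat.cast_le.2 (hg c)).trans (by rw [Nat.cast_sub (by omega), ← hcard]; exact hfg c)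
      _ = #E / (n - m : ℕ) * s := by rw [← mul_sum]; simp only [s, Nat.cast_sum]
  have hsplit : (#{e ∈ E | color e ∈ R} + #{e ∈ E | color e ∉ R} : ℚ) = #E := by
    exact_mod_cast card_filter_add_card_filter_not _
  have := le_choose_two_of_le_div_mul_add_choose_two (e := #E) hsk (by
    linarith [(Nat.cast_le (α := ℚ)).2 hkept])
  rw [hcard] at hE
  exact (Nat.cast_lt.2 hE).not_ge this

section ColorClasses

variable [DecidableEq C]

-- Each color class of `E` is repeated `f c` times, so that a transversal of the family uses at
-- most `f c` edges of color `c`.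
def colorClasses (E : Finset (Sym2 V)) (color : Sym2 V → C) (f : C → ℕ) :
    (Σ c : E.image color, Fin (f c)) → Finset (Sym2 V) :=
  fun i => {e ∈ E | color e = i.1}

lemma colorClasses_nonempty (E : Finset (Sym2 V)) (color : Sym2 V → C) (f : C → ℕ)
    (i : Σ c : E.image color, Fin (f c)) : (colorClasses E color f i).Nonempty := by
  obtain ⟨⟨c, hc⟩, _⟩ := i
  obtain ⟨e, he, rfl⟩ := mem_image.1 hc
  exact ⟨e, mem_filter.2 ⟨he, rfl⟩⟩

lemma biUnion_colorClasses [DecidableEq V] (E : Finset (Sym2 V)) (color : Sym2 V → C)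
    (f : C → ℕ) (J : Finset (Σ c : E.image color, Fin (f c))) :
    J.biUnion (colorClasses E color f) =
      {e ∈ E | color e ∈ (J.image Sigma.fst).map (Function.Embedding.subtype _)} := by
  ext e
  simp only [mem_biUnion, mem_filter, colorClasses, mem_map, mem_image,
    Function.Embedding.coe_subtype]
  constructor
  · rintro ⟨i, hi, he, hc⟩
    exact ⟨he, i.1, ⟨i, hi, rfl⟩, hc.symm⟩
  · rintro ⟨he, c, ⟨i, hi, rfl⟩, hc⟩
    exact ⟨i, hi, he, hc.symm⟩

variable [Fintype V] [DecidableEq V]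

lemma toNat_eRk_filter_add_omega_delR (G : SimpleGraph V) [Fintype G.edgeSet]
    (color : Sym2 V → C) (S : Finset C) :
    ((cycleMatroid G).eRk ↑{e ∈ G.edgeFinset | color e ∈ S}).toNat +
      omega (delR G color (G.edgeFinset.image color \ S)) = Fintype.card V := by
  have hfilter : {e ∈ G.edgeFinset | color e ∉ G.edgeFinset.image color \ S} =
      {e ∈ G.edgeFinset | color e ∈ S} :=
    filter_congr fun e he => by simp [mem_image_of_mem color he]
  rw [delR_eq_fromEdgeSet, hfilter]
  exact toNat_eRk_cycleMatroid_add_omega fun e he => mem_edgeFinset.1 (mem_filter.1 he).1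

lemma radoCondition_colorClasses (G : SimpleGraph V) [Fintype G.edgeSet] (color : Sym2 V → C)
    (f : C → ℕ) {m : ℕ} (h : ∀ R : Finset C, omega (delR G color R) ≤ m + ∑ c ∈ R, f c) :
    RadoCondition (fun S => ((cycleMatroid G).eRk S).toNat)
      (Fintype.card (Σ c : G.edgeFinset.image color, Fin (f c)) - (Fintype.card V - m))
      (colorClasses G.edgeFinset color f) := by
  intro J
  rw [biUnion_colorClasses]
  generalize hS : (J.image Sigma.fst).map (Function.Embedding.subtype _) = S
  have hSE : S ⊆ G.edgeFinset.image color := by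
    rw [← hS]
    intro c hc
    obtain ⟨c', -, rfl⟩ := mem_map.1 hc
    exact c'.2
  have hJS : #J ≤ ∑ c ∈ S, f c :=
    (card_le_sum_image_fst _ J).trans_eq (hS ▸ (sum_map _ (Function.Embedding.subtype _) f).symm)
  have hrank := toNat_eRk_filter_add_omega_delR G color S
  have hcomponents := h (G.edgeFinset.image color \ S)
  have hsum := sum_sdiff hSE (f := f)
  rw [card_sigma_fin_eq_sum]
  beta_reduce
  omega

lemma exists_isAcyclic_isChromatic_of_transversal {G : SimpleGraph V} [Fintype G.edgeSet]
    {color : Sym2 V → C} {f : C → ℕ} (x : (Σ c : G.edgeFinset.image color, Fin (f c)) → Sym2 V)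
    (hx : ∀ i, x i ∈ colorClasses G.edgeFinset color f i) {k : ℕ}
    (hk : k ≤ ((cycleMatroid G).eRk ↑(univ.image x)).toNat) :
    ∃ F ≤ G, F.IsAcyclic ∧ omega F + k = Fintype.card V ∧ IsChromatic F color f := by
  obtain ⟨B, hB⟩ :=
    ((cycleMatroid G).isRkFinite_of_finite (univ.image x).finite_toSet).exists_finset_isBasis'
  rw [← hB.encard_eq_eRk, Set.encard_coe_eq_coe_finsetCard, ENat.toNat_natCast] at hk
  obtain ⟨S, hSB, rfl⟩ := exists_subset_card_eq hk
  have hS := cycleMatroid_indep_iff.1 (hB.indep.subset (coe_subset.2 hSB))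
  have hSx : S ⊆ univ.image x := hSB.trans (coe_subset.1 hB.subset)
  refine ⟨fromEdgeSet S, (fromEdgeSet_le G).2 (Set.sdiff_subset.trans hS.1), hS.2,
    omega_fromEdgeSet_add_card (fun e he => G.not_isDiag_of_mem_edgeSet (hS.1 he)) hS.2,
    fun c => ?_⟩
  rw [colorCount_eq_card_filter]
  calc #{e ∈ (fromEdgeSet (S : Set (Sym2 V))).edgeFinset | color e = c}
      ≤ #(({i | (i.1 : C) = c} : Finset (Σ c : G.edgeFinset.image color, Fin (f c))).image x) := by
        refine card_le_card fun e he => ?_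
        obtain ⟨he, hce⟩ := mem_filter.1 he
        rw [mem_edgeFinset, edgeSet_fromEdgeSet] at he
        obtain ⟨i, -, rfl⟩ := mem_image.1 (hSx he.1)
        exact mem_image_of_mem _ (mem_filter.2 ⟨mem_univ _, (mem_filter.1 (hx i)).2.symm.trans hce⟩)
    _ ≤ f c := card_image_le.trans (card_filter_val_fst_eq_le f c)

end ColorClasses

theorem exists_isAcyclic_isChromatic_of_omega_delR_le [Fintype V]
    (G : SimpleGraph V) (color : Sym2 V → C) (f : C → ℕ) {m : ℕ} (hm : m ≤ Fintype.card V)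
    (h : ∀ R : Finset C, omega (delR G color R) ≤ m + ∑ c ∈ R, f c) :
    ∃ F ≤ G, F.IsAcyclic ∧ omega F = m ∧ IsChromatic F color f := by
  classical
  have hk : Fintype.card V - m ≤ Fintype.card (Σ c : G.edgeFinset.image color, Fin (f c)) := by
    have hrank := toNat_eRk_filter_add_omega_delR G color ∅
    rw [sdiff_empty, filter_false_of_mem fun e _ => notMem_empty (color e), coe_empty,
      Matroid.eRk_empty, ENat.toNat_zero, zero_add] at hrank
    have := h (G.edgeFinset.image color)
    rw [card_sigma_fin_eq_sum]
    omega
  obtain ⟨x, hxA, hx⟩ := (radoCondition_colorClasses G color f h).exists_transversal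
    (cycleMatroid G).monotone_toNat_eRk (cycleMatroid G).toNat_eRk_union_add_toNat_eRk_inter_le
    (colorClasses_nonempty _ color f)
  obtain ⟨F, hFG, hF, hωF, hFf⟩ :=
    exists_isAcyclic_isChromatic_of_transversal (k := Fintype.card V - m) x hxA (by omega)
  exact ⟨F, hFG, hF, by omega, hFf⟩

end Coloring

theorem stmt6_general {V C : Type*} [Fintype V] (G : SimpleGraph V) (color : Sym2 V → C)
    (f g : C → ℕ) (n m : ℕ) (hn : Fintype.card V = n)
    (hm2 : m ≤ n - 1)
    (hg : IsChromatic G color g)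
    (hE : Nat.card G.edgeSet > (n - m).choose 2)
    (hfg : ∀ c, (g c : ℚ) ≤ (Nat.card G.edgeSet : ℚ) / ((n : ℚ) - m) * f c) :
    ∃ F : SimpleGraph V, F ≤ G ∧ F.IsAcyclic ∧ omega F = m ∧
      IsChromatic F color f := by
  subst hn
  exact exists_isAcyclic_isChromatic_of_omega_delR_le G color f (by omega)
    (omega_delR_le_of_isChromatic G color f g hg hE hfg)

theorem stmt6 {V C : Type*} [Fintype V] (G : SimpleGraph V) (color : Sym2 V → C)
    (f g : C → ℕ) (n m : ℕ) (hn : Fintype.card V = n)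
    (hm1 : 1 ≤ m) (hm2 : m ≤ n - 1)
    (hg : IsChromatic G color g)
    (hE : Nat.card G.edgeSet > (n - m).choose 2)
    (hfg : ∀ c, (g c : ℚ) ≤ (Nat.card G.edgeSet : ℚ) / ((n : ℚ) - m) * f c) :
    ∃ F : SimpleGraph V, F ≤ G ∧ F.IsAcyclic ∧ omega F = m ∧
      IsChromatic F color f :=
  stmt6_general G color f g n m hn hm2 hg hE hfg
end

section
/- An edge-colored connected graph G has a heterochromatic spanning tree if and only if for every subset R of the color set C, the number of components of G - E_R(G) is at most |R| + 1. -/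
/-!
A heterochromatic spanning tree `F` gives the bound at once: `G - E_R(G)` contains `F` minus its
at most `|R|` edges with colours in `R`, and deleting an edge raises the number `ω` of components
by at most one.

For the converse, induct on the edges. If two distinct edges `e₁`, `e₂` share a colour `c`, it
suffices that the bound survives deleting one of them. Suppose it fails for both, witnessed by
`R₁` on `H₁ = G - e₁ - E_{R₁}` and by `R₂` on `H₂ = G - e₂ - E_{R₂}`; the bound for `G` forces
`c ∉ R₁ ∪ R₂`. Then `H₁ ⊔ H₂ ⊇ G - E_{R₁ ∩ R₂}` and `H₁ ⊓ H₂ ⊇ G - E_{R₁ ∪ R₂ ∪ {c}}`, so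
supermodularity `ω A + ω B ≤ ω (A ⊔ B) + ω (A ⊓ B)` (add the edges of `B` one at a time: an edge
merging two components of `A` also merges two components of `A ⊓ B`) contradicts
`ω H₁ + ω H₂ ≥ |R₁| + |R₂| + 4`.
-/

open SimpleGraph Finset

namespace SimpleGraph

variable {V : Type*} {K H : SimpleGraph V} {x y u v : V}

lemma omega_anti [Finite V] (h : H ≤ K) : omega K ≤ omega H :=
  ConnectedComponent.card_le_card_of_le h

lemma Connected.omega_le_one (h : K.Connected) : omega K ≤ 1 :=
  have := h.preconnected.subsingleton_connectedComponent
  Finite.card_le_one_iff_subsingleton.mpr this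

lemma connected_of_omega_le_one [Finite V] [Nonempty V] (h : omega K ≤ 1) : K.Connected := by
  have := Finite.card_le_one_iff_subsingleton.mp h
  exact (connected_iff K).mpr ⟨fun u v => ConnectedComponent.exact (Subsingleton.elim _ _), ‹_›⟩

lemma Reachable.of_sup_edge (h : (K ⊔ edge x y).Reachable u v) :
    K.Reachable u v ∨ K.Reachable u x ∧ K.Reachable y v ∨ K.Reachable u y ∧ K.Reachable x v := by
  obtain ⟨w⟩ := h
  induction w with
  | nil => exact .inl .rfl
  | cons hab _ ih =>
    rcases hab with hab | hab
    · have := hab.reachable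
      rcases ih with h | h | h
      exacts [.inl (this.trans h), .inr (.inl ⟨this.trans h.1, h.2⟩),
        .inr (.inr ⟨this.trans h.1, h.2⟩)]
    rw [edge_adj] at hab
    obtain ⟨⟨rfl, rfl⟩ | ⟨rfl, rfl⟩, -⟩ := hab
    · rcases ih with h | h | h
      exacts [.inr (.inl ⟨.rfl, h⟩), .inr (.inl ⟨.rfl, h.2⟩), .inl h.2]
    · rcases ih with h | h | h
      exacts [.inr (.inr ⟨.rfl, h⟩), .inl h.2, .inr (.inr ⟨.rfl, h.2⟩)]

lemma omega_sup_edge_of_reachable (h : K.Reachable x y) : omega (K ⊔ edge x y) = omega K := by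
  refine (Nat.card_eq_of_bijective (ConnectedComponent.map (Hom.ofLE le_sup_left))
    ⟨?_, ConnectedComponent.surjective_map_ofLE _⟩).symm
  refine ConnectedComponent.ind₂ fun u v huv => ?_
  simp only [ConnectedComponent.map_mk, Hom.ofLE_apply, ConnectedComponent.eq] at huv ⊢
  rcases huv.of_sup_edge with huv | ⟨hux, hyv⟩ | ⟨huy, hxv⟩
  exacts [huv, hux.trans (h.trans hyv), huy.trans (h.symm.trans hxv)]

lemma omega_sup_edge_add_one_of_not_reachable [Finite V] (h : ¬K.Reachable x y) :
    omega (K ⊔ edge x y) + 1 = omega K := by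
  have hxy : x ≠ y := fun hxy => h (hxy ▸ .rfl)
  -- `φ` merges exactly the components of `x` and `y`
  set φ := ConnectedComponent.map (Hom.ofLE (le_sup_left : K ≤ K ⊔ edge x y))
  have hinj : Set.InjOn φ {K.connectedComponentMk y}ᶜ := by
    intro c hc d hd hcd
    induction c, d using ConnectedComponent.ind₂ with | _ u v =>
    simp only [Set.mem_compl_singleton_iff, ne_eq, ConnectedComponent.eq] at hc hd
    simp only [φ, ConnectedComponent.map_mk, Hom.ofLE_apply, ConnectedComponent.eq] at hcd ⊢
    rcases hcd.of_sup_edge with huv | ⟨-, hyv⟩ | ⟨huy, -⟩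
    exacts [huv, (hd hyv.symm).elim, (hc huy).elim]
  have hsurj : φ '' {K.connectedComponentMk y}ᶜ = Set.univ := by
    refine Set.eq_univ_of_forall (ConnectedComponent.ind fun v => ?_)
    by_cases hvy : K.Reachable v y
    · refine ⟨K.connectedComponentMk x, by simpa [ConnectedComponent.eq] using h, ?_⟩
      simp only [φ, ConnectedComponent.map_mk, Hom.ofLE_apply, ConnectedComponent.eq]
      have hadj : (K ⊔ edge x y).Adj x y := .inr (by simp [edge_adj, hxy])
      exact hadj.reachable.trans (hvy.mono le_sup_left).symm
    · exact ⟨K.connectedComponentMk v, by simpa [ConnectedComponent.eq] using hvy, rfl⟩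
  rw [omega, omega, ← Set.ncard_univ, ← hsurj, hinj.ncard_image, ← Set.ncard_univ,
    Set.compl_eq_univ_sdiff, Set.ncard_sdiff_singleton_add_one (Set.mem_univ _)]

lemma omega_le_omega_sup_edge_add_one [Finite V] (K : SimpleGraph V) (x y : V) :
    omega K ≤ omega (K ⊔ edge x y) + 1 := by
  by_cases h : K.Reachable x y
  · rw [omega_sup_edge_of_reachable h]
    exact Nat.le_succ _
  · rw [omega_sup_edge_add_one_of_not_reachable h]

lemma omega_add_omega_sup_edge_le [Finite V] (hHK : H ≤ K) (x y : V) :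
    omega K + omega (H ⊔ edge x y) ≤ omega (K ⊔ edge x y) + omega H := by
  by_cases hK : K.Reachable x y
  · rw [omega_sup_edge_of_reachable hK]
    have := omega_anti (le_sup_left : H ≤ H ⊔ edge x y)
    omega
  · rw [← omega_sup_edge_add_one_of_not_reachable hK,
      ← omega_sup_edge_add_one_of_not_reachable fun h => hK (h.mono hHK)]
    omega

lemma omega_add_omega_sup_le [Finite V] (hHK : H ≤ K) (B : SimpleGraph V) :
    omega K + omega (H ⊔ B) ≤ omega (K ⊔ B) + omega H := by
  rw [← fromEdgeSet_edgeSet B]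
  induction B.edgeSet, B.edgeSet.toFinite using Set.Finite.induction_on generalizing H K with
  | empty => simp
  | @insert e s _ _ ih =>
    induction e using Sym2.ind with | _ x y =>
    have hsplit : fromEdgeSet (insert s(x, y) s) = edge x y ⊔ fromEdgeSet s := by
      rw [Set.insert_eq, fromEdgeSet_union]
      rfl
    rw [hsplit, ← sup_assoc, ← sup_assoc]
    have := ih (sup_le_sup_right hHK (edge x y))
    have := omega_add_omega_sup_edge_le hHK x y
    omega

theorem omega_add_omega_le_omega_sup_add_omega_inf [Finite V] (A B : SimpleGraph V) :
    omega A + omega B ≤ omega (A ⊔ B) + omega (A ⊓ B) := by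
  simpa [sup_eq_right.mpr (inf_le_right : A ⊓ B ≤ B)] using
    omega_add_omega_sup_le (inf_le_left : A ⊓ B ≤ A) B

lemma omega_deleteEdges_singleton_le [Finite V] (K : SimpleGraph V) (e : Sym2 V) :
    omega (K.deleteEdges {e}) ≤ omega K + 1 := by
  induction e using Sym2.ind with | _ x y =>
  calc omega (K.deleteEdges {s(x, y)})
      ≤ omega (K.deleteEdges {s(x, y)} ⊔ edge x y) + 1 := omega_le_omega_sup_edge_add_one _ x y
    _ ≤ omega K + 1 := by gcongr; exact omega_anti le_sdiff_sup

lemma omega_deleteEdges_le [Finite V] (K : SimpleGraph V) (s : Set (Sym2 V)) :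
    omega (K.deleteEdges s) ≤ omega K + s.ncard := by
  induction s, s.toFinite using Set.Finite.induction_on with
  | empty => simp
  | @insert e s he _ ih =>
    rw [Set.ncard_insert_of_notMem he, Set.insert_eq, Set.union_comm, ← deleteEdges_deleteEdges]
    have := omega_deleteEdges_singleton_le (K.deleteEdges s) e
    omega

lemma deleteEdges_singleton_lt {G : SimpleGraph V} {e : Sym2 V} (he : e ∈ G.edgeSet) :
    G.deleteEdges {e} < G :=
  (deleteEdges_le _).lt_of_ne fun h => by
    rw [← h] at he
    simp at he

lemma deleteEdges_sup_deleteEdges (G : SimpleGraph V) (s t : Set (Sym2 V)) :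
    G.deleteEdges s ⊔ G.deleteEdges t = G.deleteEdges (s ∩ t) := by
  rw [deleteEdges, deleteEdges, deleteEdges, ← sdiff_inf, fromEdgeSet_inter]

lemma deleteEdges_inf_deleteEdges (G : SimpleGraph V) (s t : Set (Sym2 V)) :
    G.deleteEdges s ⊓ G.deleteEdges t = G.deleteEdges (s ∪ t) := by
  rw [deleteEdges, deleteEdges, deleteEdges, ← sdiff_sup, fromEdgeSet_union]

section Heterochromatic

variable {C : Type*} (color : Sym2 V → C)

def ColorDeletionBound (G : SimpleGraph V) : Prop :=
  ∀ R : Finset C, omega (delR G color R) ≤ R.card + 1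

variable {color}

theorem colorDeletionBound_of_isTree [Finite V] {G F : SimpleGraph V} (hFG : F ≤ G)
    (hF : F.IsTree) (hinj : Set.InjOn color F.edgeSet) : ColorDeletionBound color G := fun R =>
  calc omega (delR G color R)
      ≤ omega (F.deleteEdges (color ⁻¹' R ∩ F.edgeSet)) := by
        rw [← deleteEdges_eq_inter_edgeSet]
        exact omega_anti (deleteEdges_mono hFG)
    _ ≤ omega F + (color ⁻¹' R ∩ F.edgeSet).ncard := omega_deleteEdges_le _ _
    _ ≤ 1 + R.card := by
        gcongr
        · exact hF.connected.omega_le_one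
        · rw [← Set.ncard_coe_finset]
          exact Set.ncard_le_ncard_of_injOn color (fun _ he => he.1)
            (hinj.mono Set.inter_subset_right)
    _ = R.card + 1 := add_comm _ _

lemma ColorDeletionBound.color_notMem [Finite V] {G : SimpleGraph V}
    (hG : ColorDeletionBound color G) {e : Sym2 V} {R : Finset C}
    (h : R.card + 1 < omega (delR (G.deleteEdges {e}) color R)) : color e ∉ R := by
  intro he
  have : delR (G.deleteEdges {e}) color R = delR G color R := by
    rw [delR, delR, deleteEdges_deleteEdges, Set.union_eq_right.mpr]
    simpa using he
  exact (hG R).not_gt (this ▸ h)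

theorem ColorDeletionBound.deleteEdges_singleton_or [Finite V] {G : SimpleGraph V}
    (hG : ColorDeletionBound color G) {e₁ e₂ : Sym2 V} (hne : e₁ ≠ e₂)
    (hc : color e₁ = color e₂) :
    ColorDeletionBound color (G.deleteEdges {e₁}) ∨
      ColorDeletionBound color (G.deleteEdges {e₂}) := by
  classical
  by_contra! h
  simp only [ColorDeletionBound, not_forall, not_le] at h
  obtain ⟨⟨R₁, h₁⟩, R₂, h₂⟩ := h
  have hc₁ := hG.color_notMem h₁
  have hc₂ := hG.color_notMem h₂
  rw [← hc] at hc₂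
  rw [delR, deleteEdges_deleteEdges] at h₁ h₂
  set H₁ := G.deleteEdges ({e₁} ∪ {e | color e ∈ R₁})
  set H₂ := G.deleteEdges ({e₂} ∪ {e | color e ∈ R₂})
  have hsup : delR G color (R₁ ∩ R₂) ≤ H₁ ⊔ H₂ := by
    rw [deleteEdges_sup_deleteEdges]
    apply deleteEdges_anti
    rintro e ⟨rfl | h₁, rfl | h₂⟩
    all_goals simp_all
  have hinf : delR G color (insert (color e₁) (R₁ ∪ R₂)) ≤ H₁ ⊓ H₂ := by
    rw [deleteEdges_inf_deleteEdges]
    apply deleteEdges_anti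
    rintro e ((rfl | h) | (rfl | h))
    all_goals simp_all
  -- `ω H₁ + ω H₂ ≥ #R₁ + #R₂ + 4`, but supermodularity bounds it by `#(R₁ ∩ R₂) + #(R₁ ∪ R₂) + 3`
  have := omega_add_omega_le_omega_sup_add_omega_inf H₁ H₂
  have := omega_anti hsup
  have := omega_anti hinf
  have := hG (R₁ ∩ R₂)
  have := hG (insert (color e₁) (R₁ ∪ R₂))
  have := card_inter_add_card_union R₁ R₂
  have := card_insert_le (color e₁) (R₁ ∪ R₂)
  omega

theorem ColorDeletionBound.exists_isTree [Finite V] [Nonempty V] {G : SimpleGraph V}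
    (hG : ColorDeletionBound color G) :
    ∃ F ≤ G, F.IsTree ∧ Set.InjOn color F.edgeSet := by
  induction G using WellFoundedLT.induction with | _ G ih =>
  by_cases hinj : Set.InjOn color G.edgeSet
  · have hconn : G.Connected := connected_of_omega_le_one (by simpa [delR] using hG ∅)
    obtain ⟨F, hFG, hF⟩ := hconn.exists_isTree_le
    exact ⟨F, hFG, hF, hinj.mono (edgeSet_mono hFG)⟩
  obtain ⟨e₁, he₁, e₂, he₂, hc, hne⟩ : ∃ e₁ ∈ G.edgeSet, ∃ e₂ ∈ G.edgeSet,
      color e₁ = color e₂ ∧ e₁ ≠ e₂ := by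
    simpa [Set.InjOn] using hinj
  have of_delete {e} (he : e ∈ G.edgeSet) (h : ColorDeletionBound color (G.deleteEdges {e})) :
      ∃ F ≤ G, F.IsTree ∧ Set.InjOn color F.edgeSet :=
    have ⟨F, hFG, hF⟩ := ih _ (deleteEdges_singleton_lt he) h
    ⟨F, hFG.trans (deleteEdges_le _), hF⟩
  exact (hG.deleteEdges_singleton_or hne hc).elim (of_delete he₁) (of_delete he₂)

end Heterochromatic

end SimpleGraph

theorem stmt9 {V C : Type*} [Fintype V] (G : SimpleGraph V) (color : Sym2 V → C)
    (hG : G.Connected) :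
    (∃ F : SimpleGraph V, F ≤ G ∧ F.IsTree ∧ Set.InjOn color F.edgeSet) ↔
      ∀ R : Finset C, omega (delR G color R) ≤ R.card + 1 := by
  have := hG.nonempty
  exact ⟨fun ⟨_, hFG, hF, hinj⟩ => colorDeletionBound_of_isTree hFG hF hinj,
    ColorDeletionBound.exists_isTree⟩
end
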